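/- arXiv:1911.11461 — 3 statements merged into one kernel-verified Lean document; each statement's English description precedes it below -/
import Mathlib

section
/- Every Lindelöf space X is Cl_{t(X)}-Lindelöf, where t(X) is the tightness of X. -/
open Cardinal Set Topology

universe u

/-- A free sequence of length `o` in the topology `t`: a transfinite sequence indexed by
the ordinals below `o` such that every initial segment's closure is disjoint from the
closure of the corresponding final segment. -/
def IsFreeSeqOn {X : Type u} (t : TopologicalSpace X) (o : Ordinal.{u})
    (x : {α : Ordinal.{u} // α < o} → X) : Prop :=
  ∀ i : {α : Ordinal.{u} // α < o},
    @closure X t (x '' {j | j < i}) ∩ @closure X t (x '' {j | i ≤ j}) = ∅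

/-- The tightness of a topology: the least infinite cardinal `κ` such that whenever a
point is in the closure of a set `A`, it is in the closure of a subset of `A` of
cardinality at most `κ`. -/
noncomputable def tightnessOf {X : Type u} (t : TopologicalSpace X) : Cardinal.{u} :=
  sInf {κ : Cardinal.{u} | ℵ₀ ≤ κ ∧ ∀ (A : Set X) (p : X), p ∈ @closure X t A →
    ∃ B ⊆ A, #↥B ≤ κ ∧ p ∈ @closure X t B}

/-- The Lindelöf number: the least infinite cardinal `κ` such that every open cover has
a subcover of cardinality at most `κ`. -/
noncomputable def lindelofNumberOf {X : Type u} (t : TopologicalSpace X) : Cardinal.{u} :=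
  sInf {κ : Cardinal.{u} | ℵ₀ ≤ κ ∧ ∀ 𝒰 : Set (Set X), (∀ U ∈ 𝒰, @IsOpen X t U) →
    ⋃₀ 𝒰 = Set.univ → ∃ 𝒱 ⊆ 𝒰, #↥𝒱 ≤ κ ∧ ⋃₀ 𝒱 = Set.univ}

/-- `F(X)`: the supremum of the cardinalities (lengths) of free sequences, at least ℵ₀. -/
noncomputable def freeNumberOf {X : Type u} (t : TopologicalSpace X) : Cardinal.{u} :=
  ℵ₀ ⊔ sSup {c : Cardinal.{u} |
    ∃ x : {α : Ordinal.{u} // α < c.ord} → X, IsFreeSeqOn t c.ord x}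

/-- The G_δ-modification: the topology generated by the G_δ-subsets. -/
def gDelta {X : Type u} (t : TopologicalSpace X) : TopologicalSpace X :=
  TopologicalSpace.generateFrom {s : Set X | @IsGδ X t s}

/-- `Cl_κ`-Lindelöf: every open `Cl_κ`-cover of any subset `W` contains a countable
subfamily covering `W`. -/
def ClLindelofOf {X : Type u} (t : TopologicalSpace X) (κ : Cardinal.{u}) : Prop :=
  ∀ (W : Set X) (𝒰 : Set (Set X)), (∀ U ∈ 𝒰, @IsOpen X t U) →
    (∀ C ⊆ W, #↥C ≤ κ → ∃ U ∈ 𝒰, @closure X t C ⊆ U) →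
    ∃ 𝒱 ⊆ 𝒰, 𝒱.Countable ∧ W ⊆ ⋃₀ 𝒱

/-! Closure points of `W` are already closure points of subsets of `W` of size at most `t(X)`,
and a `Cl_{t(X)}`-cover contains the closures of all such subsets; hence it covers the closed
set `closure W`. In a Lindelöf space this closed set is Lindelöf, so countably many members of
the cover suffice. -/

theorem exists_subset_mk_le_tightnessOf_mem_closure {X : Type u} [t : TopologicalSpace X]
    {A : Set X} {p : X} (hp : p ∈ closure A) :
    ∃ B ⊆ A, #B ≤ tightnessOf t ∧ p ∈ closure B := by
  have hmem : tightnessOf t ∈ {κ : Cardinal.{u} | ℵ₀ ≤ κ ∧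
      ∀ (A : Set X) (p : X), p ∈ closure A → ∃ B ⊆ A, #B ≤ κ ∧ p ∈ closure B} := by
    refine csInf_mem ⟨#X ⊔ ℵ₀, le_sup_right, fun A p hp => ⟨A, subset_rfl, ?_, hp⟩⟩
    exact (mk_set_le A).trans le_sup_left
  exact hmem.2 A p hp

theorem closure_subset_sUnion_of_tightnessOf_le {X : Type u} [t : TopologicalSpace X]
    {κ : Cardinal.{u}} (hκ : tightnessOf t ≤ κ) {W : Set X} {𝒰 : Set (Set X)}
    (h𝒰 : ∀ C ⊆ W, #C ≤ κ → ∃ U ∈ 𝒰, closure C ⊆ U) :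
    closure W ⊆ ⋃₀ 𝒰 := by
  intro x hx
  obtain ⟨B, hBW, hBcard, hxB⟩ := exists_subset_mk_le_tightnessOf_mem_closure hx
  obtain ⟨U, hU, hBU⟩ := h𝒰 B hBW (hBcard.trans hκ)
  exact ⟨U, hU, hBU hxB⟩

theorem IsLindelof.exists_countable_subset_sUnion {X : Type u} [TopologicalSpace X] {s : Set X}
    (hs : IsLindelof s) {𝒰 : Set (Set X)} (hopen : ∀ U ∈ 𝒰, IsOpen U) (hcov : s ⊆ ⋃₀ 𝒰) :
    ∃ 𝒱 ⊆ 𝒰, 𝒱.Countable ∧ s ⊆ ⋃₀ 𝒱 := by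
  rw [sUnion_eq_biUnion] at hcov
  obtain ⟨𝒱, h𝒱𝒰, h𝒱, hs𝒱⟩ := hs.elim_countable_subcover_image (c := id) hopen hcov
  exact ⟨𝒱, h𝒱𝒰, h𝒱, by rwa [sUnion_eq_biUnion]⟩

theorem LindelofSpace.clLindelofOf_of_tightnessOf_le {X : Type u} [t : TopologicalSpace X]
    [LindelofSpace X] {κ : Cardinal.{u}} (hκ : tightnessOf t ≤ κ) : ClLindelofOf t κ := by
  intro W 𝒰 hopen hcov
  obtain ⟨𝒱, h𝒱𝒰, h𝒱, hW⟩ := isClosed_closure.isLindelof.exists_countable_subset_sUnion hopen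
    (closure_subset_sUnion_of_tightnessOf_le hκ hcov)
  exact ⟨𝒱, h𝒱𝒰, h𝒱, subset_closure.trans hW⟩

/-- every Lindelöf space `X` is `Cl_{t(X)}`-Lindelöf. -/
theorem statement1 {X : Type u} [tX : TopologicalSpace X] [LindelofSpace X] :
    ClLindelofOf tX (tightnessOf tX) :=
  LindelofSpace.clLindelofOf_of_tightnessOf_le le_rfl
end

section
/- If X is a Lindelöf regular space, then the tightness of the G_δ-modification of X is at most 2^{t(X)}, where t(X) is the tightness of X. -/
/-!
Let `κ = t(X)` and `p ∈ cl_δ A`. In a regular space, `p ∉ cl_δ D` exactly when `D` is covered by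
countably many open sets whose closures miss `p`. Fix, for every `C` with `p ∉ cl C`, an open
`V C ⊇ cl C` with `p ∉ cl (V C)`; since `p ∈ cl_δ A`, every countable family `𝒞` of such `C` has
a point of `A` outside `⋃ C ∈ 𝒞, V C`. Closing off under this choice along `κ⁺` (a regular
cardinal, so every `κ`-small family appears at some stage) gives `B ⊆ A` with `|B| ≤ 2^κ`.
If `p ∉ cl_δ B`, then `B ⊆ ⋃ W_n` with `p ∉ cl W_n`; by Lindelöfness and `t(X) ≤ κ`, each
`B ∩ W_n` is covered by countably many `V C` with `C ⊆ B ∩ W_n` of size `≤ κ`, and the point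
chosen for all these `C` lies in `B` yet outside every `V C`.
-/

open Cardinal Set Topology

universe u

section ClosingOff

variable {α : Type u} {κ : Cardinal.{u}}

theorem Cardinal.max_aleph0_pow_le_two_pow (hκ : ℵ₀ ≤ κ) {c : Cardinal.{u}} (hc : c ≤ 2 ^ κ) :
    max c ℵ₀ ^ κ ≤ 2 ^ κ :=
  calc max c ℵ₀ ^ κ ≤ (2 ^ κ) ^ κ := power_le_power_right (max_le hc (hκ.trans (cantor κ).le))
    _ = 2 ^ κ := by rw [← power_mul, mul_eq_self hκ]

def IsSmallFamily (κ : Cardinal.{u}) (𝒞 : Set (Set α)) : Prop :=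
  #𝒞 ≤ κ ∧ ∀ C ∈ 𝒞, #C ≤ κ

theorem IsSmallFamily.mk_sUnion_le (hκ : ℵ₀ ≤ κ) {𝒞 : Set (Set α)} (h𝒞 : IsSmallFamily κ 𝒞) :
    #(⋃₀ 𝒞) ≤ κ :=
  calc #(⋃₀ 𝒞) ≤ #𝒞 * ⨆ C : 𝒞, #C := Cardinal.mk_sUnion_le 𝒞
    _ ≤ κ * κ := mul_le_mul' h𝒞.1 (ciSup_le' fun C => h𝒞.2 C C.2)
    _ = κ := mul_eq_self hκ

theorem mk_setOf_isSmallFamily_le (hκ : ℵ₀ ≤ κ) {U : Set α} (hU : #U ≤ 2 ^ κ) :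
    #{𝒞 : Set (Set α) | IsSmallFamily κ 𝒞 ∧ ⋃₀ 𝒞 ⊆ U} ≤ 2 ^ κ := by
  let s : Set (Set α) := {C | C ⊆ U ∧ #C ≤ κ}
  have hs : #s ≤ 2 ^ κ := (mk_bounded_subset_le U κ).trans (max_aleph0_pow_le_two_pow hκ hU)
  calc #{𝒞 : Set (Set α) | IsSmallFamily κ 𝒞 ∧ ⋃₀ 𝒞 ⊆ U}
      ≤ #{𝒞 : Set (Set α) // 𝒞 ⊆ s ∧ #𝒞 ≤ κ} :=
        mk_subtype_mono fun 𝒞 h =>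
          ⟨fun C hC => ⟨(subset_sUnion_of_mem hC).trans h.2, h.1.2 C hC⟩, h.1.1⟩
    _ ≤ 2 ^ κ := (mk_bounded_subset_le s κ).trans (max_aleph0_pow_le_two_pow hκ hs)

noncomputable def closingStage (κ : Cardinal.{u}) (F : Set (Set α) → α) (i : Ordinal.{u}) :
    Set α :=
  F '' {𝒞 | IsSmallFamily κ 𝒞 ∧ ⋃₀ 𝒞 ⊆ ⋃ j, ⋃ (_ : j < i), closingStage κ F j}
termination_by i

variable {F : Set (Set α) → α}

theorem closingStage_mono : Monotone (closingStage κ F) := by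
  intro i i' hii' x hx
  rw [closingStage] at hx ⊢
  obtain ⟨𝒞, ⟨h𝒞, hsub⟩, rfl⟩ := hx
  refine ⟨𝒞, ⟨h𝒞, hsub.trans ?_⟩, rfl⟩
  exact biUnion_mono (fun j (hj : j < i) => hj.trans_le hii') fun _ _ => subset_rfl

theorem mk_closingStage_le (hκ : ℵ₀ ≤ κ) {i : Ordinal.{u}} (hi : i < (Order.succ κ).ord) :
    #(closingStage κ F i) ≤ 2 ^ κ := by
  induction i using WellFoundedLT.induction with
  | _ i ih =>
    have hcard : i.card ≤ 2 ^ κ :=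
      (Order.lt_succ_iff.1 (lt_ord.1 hi)).trans (cantor κ).le
    rw [closingStage]
    refine mk_image_le.trans (mk_setOf_isSmallFamily_le hκ ?_)
    exact mk_biUnion_le_of_le hcard (hκ.trans (cantor κ).le) _ fun j hj => ih j hj (hj.trans hi)

theorem exists_closingStage_of_subset (hκ : ℵ₀ ≤ κ) {D : Set α}
    (hD : D ⊆ ⋃ i < (Order.succ κ).ord, closingStage κ F i) (hDκ : #D ≤ κ) :
    ∃ i < (Order.succ κ).ord, D ⊆ closingStage κ F i := by
  have : ∀ x : D, ∃ i < (Order.succ κ).ord, (x : α) ∈ closingStage κ F i := fun x => by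
    simpa using hD x.2
  choose i hi hxi using this
  refine ⟨⨆ x, i x, Ordinal.iSup_lt_of_lt_cof ?_ hi, fun x hx => ?_⟩
  · rw [(isRegular_succ hκ).cof_ord]
    exact hDκ.trans_lt (Order.lt_succ κ)
  · exact closingStage_mono (Ordinal.le_iSup i ⟨x, hx⟩) (hxi ⟨x, hx⟩)

theorem exists_mk_le_two_pow_closed (hκ : ℵ₀ ≤ κ) (F : Set (Set α) → α) :
    ∃ B : Set α, #B ≤ 2 ^ κ ∧ B ⊆ range F ∧
      ∀ 𝒞, IsSmallFamily κ 𝒞 → ⋃₀ 𝒞 ⊆ B → F 𝒞 ∈ B := by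
  refine ⟨⋃ i < (Order.succ κ).ord, closingStage κ F i, ?_, ?_, fun 𝒞 h𝒞 hB => ?_⟩
  · refine mk_biUnion_le_of_le ?_ (hκ.trans (cantor κ).le) _ fun i hi => mk_closingStage_le hκ hi
    rw [card_ord]
    exact Order.succ_le_of_lt (cantor κ)
  · refine iUnion₂_subset fun i _ => ?_
    rw [closingStage]
    exact image_subset_range _ _
  · obtain ⟨i, hi, hsub⟩ := exists_closingStage_of_subset hκ hB (h𝒞.mk_sUnion_le hκ)
    have hi' : i + 1 < (Order.succ κ).ord :=
      (isSuccLimit_ord (hκ.trans (Order.le_succ κ))).add_one_lt hi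
    refine mem_biUnion hi' ?_
    rw [closingStage]
    exact ⟨𝒞, ⟨h𝒞, hsub.trans fun x hx => mem_iUnion₂.2 ⟨i, lt_add_one i, hx⟩⟩, rfl⟩

end ClosingOff

section Tightness

variable {X : Type u}

def IsTightnessBound (t : TopologicalSpace X) (κ : Cardinal.{u}) : Prop :=
  ∀ (A : Set X) (p : X), p ∈ closure[t] A → ∃ B ⊆ A, #B ≤ κ ∧ p ∈ closure[t] B

theorem tightnessOf_mem (t : TopologicalSpace X) :
    tightnessOf t ∈ {κ : Cardinal.{u} | ℵ₀ ≤ κ ∧ IsTightnessBound t κ} :=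
  csInf_mem ⟨max #X ℵ₀, le_max_right _ _,
    fun A _ hp => ⟨A, subset_rfl, (mk_set_le A).trans (le_max_left _ _), hp⟩⟩

theorem tightnessOf_le {t : TopologicalSpace X} {κ : Cardinal.{u}} (hκ : ℵ₀ ≤ κ)
    (h : IsTightnessBound t κ) : tightnessOf t ≤ κ :=
  csInf_le' ⟨hκ, h⟩

end Tightness

section GDelta

variable {X : Type u} [tX : TopologicalSpace X] {p : X} {D : Set X}

theorem isTopologicalBasis_gDelta :
    @TopologicalSpace.IsTopologicalBasis X (gDelta tX) {s : Set X | IsGδ s} := by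
  have := TopologicalSpace.isTopologicalBasis_of_subbasis_of_inter (t := gDelta tX) rfl
    fun s hs t ht => IsGδ.inter hs ht
  rwa [insert_eq_of_mem (s := {s : Set X | IsGδ s}) IsGδ.univ] at this

theorem mem_closure_gDelta_iff :
    p ∈ closure[gDelta tX] D ↔ ∀ G, IsGδ G → p ∈ G → (G ∩ D).Nonempty :=
  @TopologicalSpace.IsTopologicalBasis.mem_closure_iff X (gDelta tX) _ isTopologicalBasis_gDelta D p

theorem notMem_closure_gDelta_of_countable {𝒱 : Set (Set X)} (h𝒱 : 𝒱.Countable)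
    (hV : ∀ V ∈ 𝒱, IsOpen V ∧ p ∉ closure V) (hD : D ⊆ ⋃₀ 𝒱) : p ∉ closure[gDelta tX] D := by
  rw [mem_closure_gDelta_iff]
  push Not
  refine ⟨⋂ V ∈ 𝒱, (closure V)ᶜ,
    IsGδ.biInter_of_isOpen h𝒱 fun V _ => isClosed_closure.isOpen_compl,
    mem_iInter₂.2 fun V hV' => (hV V hV').2, eq_empty_iff_forall_notMem.2 ?_⟩
  rintro x ⟨hxG, hxD⟩
  obtain ⟨V, hV', hxV⟩ := hD hxD
  exact mem_iInter₂.1 hxG V hV' (subset_closure hxV)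

theorem exists_countable_of_notMem_closure_gDelta [RegularSpace X]
    (h : p ∉ closure[gDelta tX] D) :
    ∃ 𝒱 : Set (Set X), 𝒱.Countable ∧ (∀ V ∈ 𝒱, IsOpen V ∧ p ∉ closure V) ∧ D ⊆ ⋃₀ 𝒱 := by
  rw [mem_closure_gDelta_iff] at h
  push Not at h
  obtain ⟨_, ⟨T, hTo, hTc, rfl⟩, hpT, hTD⟩ := h
  have : ∀ U ∈ T, ∃ K ∈ 𝓝 p, IsClosed K ∧ K ⊆ U := fun U hU =>
    exists_mem_nhds_isClosed_subset ((hTo U hU).mem_nhds (hpT U hU))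
  choose! K hKp hKc hKU using this
  refine ⟨(fun U => (K U)ᶜ) '' T, hTc.image _, forall_mem_image.2 fun U hU => ?_, fun x hxD => ?_⟩
  · rw [closure_compl, mem_compl_iff, not_not, mem_interior_iff_mem_nhds]
    exact ⟨(hKc U hU).isOpen_compl, hKp U hU⟩
  · obtain ⟨U, hU, hxU⟩ : ∃ U ∈ T, x ∉ U := by
      by_contra! hx
      exact (hTD ▸ ⟨hx, hxD⟩ : x ∈ (∅ : Set X))
    exact ⟨_, mem_image_of_mem _ hU, fun hxK => hxU (hKU U hU hxK)⟩

theorem exists_forall_notMem_sUnion_of_mem_closure_gDelta {A : Set X}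
    (hp : p ∈ closure[gDelta tX] A) :
    ∃ F : Set (Set X) → X, range F ⊆ A ∧ ∀ 𝒰 : Set (Set X), 𝒰.Countable →
      (∀ U ∈ 𝒰, IsOpen U ∧ p ∉ closure U) → F 𝒰 ∉ ⋃₀ 𝒰 := by
  have : ∀ 𝒰 : Set (Set X), ∃ a ∈ A, 𝒰.Countable →
      (∀ U ∈ 𝒰, IsOpen U ∧ p ∉ closure U) → a ∉ ⋃₀ 𝒰 := by
    intro 𝒰
    by_cases h : 𝒰.Countable ∧ ∀ U ∈ 𝒰, IsOpen U ∧ p ∉ closure U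
    · obtain ⟨a, ha, haU⟩ :=
        not_subset.1 fun hA => notMem_closure_gDelta_of_countable h.1 h.2 hA hp
      exact ⟨a, ha, fun _ _ => haU⟩
    · obtain ⟨a, -, ha⟩ := mem_closure_gDelta_iff.1 hp univ IsGδ.univ trivial
      exact ⟨a, ha, fun h₁ h₂ => absurd ⟨h₁, h₂⟩ h⟩
  choose F hFA hF using this
  exact ⟨F, range_subset_iff.2 hFA, hF⟩

end GDelta

section Regular

variable {X : Type u} [tX : TopologicalSpace X]

theorem exists_isOpen_closure_subset_notMem_closure [RegularSpace X] (p : X) (C : Set X) :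
    ∃ V, IsOpen V ∧ closure C ⊆ V ∧ (p ∉ closure C → p ∉ closure V) := by
  by_cases hp : p ∈ closure C
  · exact ⟨univ, isOpen_univ, subset_univ _, fun h => absurd hp h⟩
  · obtain ⟨K, hKp, hKc, hKC⟩ :=
      exists_mem_nhds_isClosed_subset (isClosed_closure.isOpen_compl.mem_nhds hp)
    refine ⟨Kᶜ, hKc.isOpen_compl, subset_compl_comm.1 hKC, fun _ => ?_⟩
    rwa [closure_compl, mem_compl_iff, not_not, mem_interior_iff_mem_nhds]

theorem exists_countable_cover_of_isTightnessBound [LindelofSpace X] {κ : Cardinal.{u}}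
    (ht : IsTightnessBound tX κ) {V : Set X → Set X} (hVo : ∀ C, IsOpen (V C))
    (hV : ∀ C, closure C ⊆ V C) (S : Set X) :
    ∃ 𝒞 : Set (Set X), 𝒞.Countable ∧ (∀ C ∈ 𝒞, C ⊆ S ∧ #C ≤ κ) ∧ S ⊆ ⋃ C ∈ 𝒞, V C := by
  have hcover : closure S ⊆ ⋃ C : {C : Set X // C ⊆ S ∧ #C ≤ κ}, V C := fun x hx => by
    obtain ⟨C, hCS, hCκ, hxC⟩ := ht S x hx
    exact mem_iUnion.2 ⟨⟨C, hCS, hCκ⟩, hV C hxC⟩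
  obtain ⟨r, hrc, hr⟩ := isClosed_closure.isLindelof.elim_countable_subcover
    (fun C : {C : Set X // C ⊆ S ∧ #C ≤ κ} => V C) (fun C => hVo C) hcover
  refine ⟨Subtype.val '' r, hrc.image _, forall_mem_image.2 fun C _ => C.2, fun x hx => ?_⟩
  obtain ⟨C, hC, hxC⟩ := mem_iUnion₂.1 (hr (subset_closure hx))
  exact mem_iUnion₂.2 ⟨C.1, mem_image_of_mem _ hC, hxC⟩

theorem IsTightnessBound.gDelta [RegularSpace X] [LindelofSpace X] {κ : Cardinal.{u}}
    (hκ : ℵ₀ ≤ κ) (ht : IsTightnessBound tX κ) : IsTightnessBound (gDelta tX) (2 ^ κ) := by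
  intro A p hp
  choose V hVo hVC hVp using exists_isOpen_closure_subset_notMem_closure (X := X) p
  obtain ⟨F, hFA, hF⟩ := exists_forall_notMem_sUnion_of_mem_closure_gDelta hp
  obtain ⟨B, hBcard, hBF, hBclosed⟩ := exists_mk_le_two_pow_closed hκ fun 𝒞 => F (V '' 𝒞)
  have hBA : B ⊆ A := hBF.trans ((range_comp_subset_range _ F).trans hFA)
  refine ⟨B, hBA, hBcard, ?_⟩
  by_contra hpB
  obtain ⟨𝒱, h𝒱c, h𝒱, hB𝒱⟩ := exists_countable_of_notMem_closure_gDelta hpB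
  choose 𝒞 h𝒞c h𝒞S h𝒞cov using
    fun W => exists_countable_cover_of_isTightnessBound ht hVo hVC (B ∩ W)
  set 𝒟 := ⋃ W ∈ 𝒱, 𝒞 W
  have h𝒟c : 𝒟.Countable := h𝒱c.biUnion fun W _ => h𝒞c W
  have h𝒟 : ∀ C ∈ 𝒟, C ⊆ B ∧ #C ≤ κ ∧ p ∉ closure C := by
    intro C hC
    obtain ⟨W, hW, hCW⟩ := mem_iUnion₂.1 hC
    obtain ⟨hCBW, hCκ⟩ := h𝒞S W C hCW
    exact ⟨hCBW.trans inter_subset_left, hCκ,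
      fun hpC => (h𝒱 W hW).2 (closure_mono (hCBW.trans inter_subset_right) hpC)⟩
  have hF𝒟 : F (V '' 𝒟) ∈ B := hBclosed 𝒟 ⟨h𝒟c.le_aleph0.trans hκ, fun C hC => (h𝒟 C hC).2.1⟩
    (sUnion_subset fun C hC => (h𝒟 C hC).1)
  obtain ⟨W, hW, hFW⟩ := hB𝒱 hF𝒟
  obtain ⟨C, hC, hFC⟩ := mem_iUnion₂.1 (h𝒞cov W ⟨hF𝒟, hFW⟩)
  exact hF _ (h𝒟c.image V) (forall_mem_image.2 fun C hC => ⟨hVo C, hVp C (h𝒟 C hC).2.2⟩)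
    ⟨V C, mem_image_of_mem V (mem_iUnion₂.2 ⟨W, hW, hC⟩), hFC⟩

end Regular

/-- if `X` is Lindelöf regular, then `t(X_δ) ≤ 2^{t(X)}`. -/
theorem statement4 {X : Type u} [tX : TopologicalSpace X] [T3Space X] [LindelofSpace X] :
    tightnessOf (gDelta tX) ≤ 2 ^ tightnessOf tX := by
  obtain ⟨hκ, ht⟩ := tightnessOf_mem tX
  exact tightnessOf_le (hκ.trans (cantor _).le) (ht.gDelta hκ)
end

section
/- If X is a regular (T3) space, then the tightness of the G_δ-modification of X is at most 2^{s(X)}, where s(X) is the spread of X (the supremum of cardinalities of discrete subspaces). -/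
open Cardinal Set Topology

universe u

/-- The spread of `X`: the supremum of the cardinalities of discrete subspaces
(together with `ℵ₀`). -/
noncomputable def spreadOf (X : Type u) [TopologicalSpace X] : Cardinal.{u} :=
  ℵ₀ ⊔ sSup {c : Cardinal.{u} | ∃ D : Set X, DiscreteTopology ↥D ∧ #↥D = c}

/-!
Let `κ = s(X)`. If the tightness of `X_δ` exceeded `2 ^ κ`, transfinite recursion would give a
left-separated sequence `(x i)_{i < (2 ^ κ)⁺}` in `X_δ`. By regularity, every `G_δ` neighbourhood
of `x i` contains the intersection of countably many closed neighbourhoods `F i n`, so these can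
be chosen with `⋂ n, F i n` missing all earlier terms. Colour a pair `j < i` by an index `m` with
`x j ∉ F i m` and by an index `n` with `x i ∉ F j n` (or by "none" if `x i ∈ ⋂ n, F j n`). There
are only countably many colours, so the Erdős–Rado theorem `(2 ^ κ)⁺ → (κ⁺)²_κ` yields a
homogeneous set of size `κ⁺`, and its points form a discrete subspace of `X`, contradicting
`s(X) = κ`.
-/

theorem mk_Iio_le_of_succ_ord_toType {κ : Cardinal.{u}} (δ : (Order.succ κ).ord.ToType) :
    #(Iio δ) ≤ κ :=
  Order.lt_succ_iff.mp (by simpa using mk_Iio_lt δ)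

theorem eqOn_of_sigma_mk_domRestrict_eq {J C : Type*} [Preorder J] {f g : J → C} {δ δ' : J}
    (h : (⟨δ, (Iio δ).domRestrict f⟩ : Σ δ : J, (Iio δ → C)) = ⟨δ', (Iio δ').domRestrict g⟩) :
    δ = δ' ∧ EqOn f g (Iio δ) := by
  obtain ⟨rfl, h⟩ := Sigma.mk.inj_iff.mp h
  exact ⟨rfl, domRestrict_eq_domRestrict_iff.mp (eq_of_heq h)⟩

namespace ErdosRado

variable {I C J : Type u} [Nonempty I] [LinearOrder J] [WellFoundedLT J]

/-- The `ξ`-th term is some point `y`, distinct from the earlier terms `s ζ`, with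
`c (s ζ) y = c (s ζ) a` for all of them; if there is no such point, `Classical.epsilon` returns
an arbitrary one. -/
noncomputable def greedySeq (c : I → I → C) (a : I) : J → I :=
  WellFoundedLT.fix fun ξ s =>
    Classical.epsilon fun y => ∀ ζ (hζ : ζ < ξ), s ζ hζ ≠ y ∧ c (s ζ hζ) y = c (s ζ hζ) a

theorem greedySeq_eq (c : I → I → C) (a : I) (ξ : J) :
    greedySeq c a ξ = Classical.epsilon fun y =>
      ∀ ζ < ξ, greedySeq c a ζ ≠ y ∧ c (greedySeq c a ζ) y = c (greedySeq c a ζ) a :=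
  WellFoundedLT.fix_eq _ ξ

theorem greedySeq_spec {c : I → I → C} {a : I} (ha : a ∉ range (greedySeq (J := J) c a))
    {ζ ξ : J} (hζξ : ζ < ξ) :
    greedySeq c a ζ ≠ greedySeq c a ξ ∧
      c (greedySeq c a ζ) (greedySeq c a ξ) = c (greedySeq c a ζ) a := by
  rw [greedySeq_eq c a ξ]
  exact Classical.epsilon_spec (p := fun y => ∀ ζ < ξ, greedySeq c a ζ ≠ y ∧
    c (greedySeq c a ζ) y = c (greedySeq c a ζ) a) ⟨a, fun ζ _ => ⟨fun h => ha ⟨ζ, h⟩, rfl⟩⟩ ζ hζξ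

theorem greedySeq_congr {c : I → I → C} {a b : I} {δ : J}
    (h : ∀ ζ < δ, c (greedySeq c a ζ) a = c (greedySeq c b ζ) b) :
    ∀ ξ ≤ δ, greedySeq c a ξ = greedySeq c b ξ := by
  intro ξ
  induction ξ using WellFoundedLT.induction with
  | _ ξ ih =>
    intro hξ
    rw [greedySeq_eq c a, greedySeq_eq c b]
    congr 1
    ext y
    refine forall₂_congr fun ζ hζ => ?_
    rw [h ζ (hζ.trans_le hξ), ih ζ hζ (hζ.le.trans hξ)]

theorem mk_sigma_Iio_fun_le {κ : Cardinal.{u}} (hκ : ℵ₀ ≤ κ) (hC : #C ≤ κ) :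
    #(Σ δ : (Order.succ κ).ord.ToType, (Iio δ → C)) ≤ 2 ^ κ := by
  have hterm (δ : (Order.succ κ).ord.ToType) : #(Iio δ → C) ≤ 2 ^ κ := by
    rw [← power_def]
    calc #C ^ #(Iio δ) ≤ κ ^ #(Iio δ) := power_le_power_right hC
      _ ≤ κ ^ κ := power_le_power_left (aleph0_pos.trans_le hκ).ne'
          (mk_Iio_le_of_succ_ord_toType δ)
      _ = 2 ^ κ := power_self_eq hκ
  rw [mk_sigma]
  calc sum (fun δ => #(Iio δ → C)) ≤ sum fun _ : (Order.succ κ).ord.ToType => 2 ^ κ :=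
        sum_le_sum _ _ hterm
    _ = #(Order.succ κ).ord.ToType * 2 ^ κ := sum_const' _ _
    _ ≤ 2 ^ κ * 2 ^ κ := by
        rw [mk_ord_toType]
        exact mul_le_mul_left (Order.succ_le_of_lt (cantor κ)) _
    _ = 2 ^ κ := mul_eq_self (hκ.trans (cantor κ).le)

/-- If every greedy sequence returned to its base point, the base point would be determined by
that stage and the colours seen so far, of which there are only `2 ^ κ` possibilities. -/
theorem exists_notMem_range_greedySeq {κ : Cardinal.{u}} (hκ : ℵ₀ ≤ κ) (hC : #C ≤ κ)
    (hI : 2 ^ κ < #I) (c : I → I → C) :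
    ∃ a, a ∉ range (greedySeq (J := (Order.succ κ).ord.ToType) c a) := by
  by_contra! hbad
  choose ξ hξ using hbad
  let trace (a : I) : Σ δ : (Order.succ κ).ord.ToType, (Iio δ → C) :=
    ⟨ξ a, (Iio (ξ a)).domRestrict fun ζ => c (greedySeq c a ζ) a⟩
  have htrace : Function.Injective trace := by
    intro a b hab
    obtain ⟨hξab, htr⟩ := eqOn_of_sigma_mk_domRestrict_eq hab
    rw [← hξ a, ← hξ b, ← hξab]
    exact greedySeq_congr htr _ le_rfl
  exact (mk_le_of_injective htrace).trans (mk_sigma_Iio_fun_le hκ hC) |>.not_gt hI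

end ErdosRado

open ErdosRado in
theorem erdos_rado {κ : Cardinal.{u}} (hκ : ℵ₀ ≤ κ) {I C : Type u} (hC : #C ≤ κ)
    (hI : 2 ^ κ < #I) (c : I → I → C) (hc : ∀ a b, c a b = c b a) :
    ∃ H : Set I, κ < #H ∧ ∃ col, ∀ i ∈ H, ∀ j ∈ H, i ≠ j → c i j = col := by
  have : Nonempty I := mk_ne_zero_iff.mp (hI.trans_le' zero_le).ne'
  obtain ⟨a, ha⟩ := exists_notMem_range_greedySeq hκ hC hI c
  set s := greedySeq (J := (Order.succ κ).ord.ToType) c a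
  have hs : Function.Injective s := .of_lt_imp_ne fun ζ ξ h => (greedySeq_spec ha h).1
  obtain ⟨col, hcol⟩ := infinite_pigeonhole_card (fun ζ => c (s ζ) a) (Order.succ κ)
    (mk_ord_toType _).ge (hκ.trans (Order.le_succ κ))
    (by rw [(isRegular_succ hκ).cof_ord]; exact hC.trans_lt (Order.lt_succ κ))
  refine ⟨s '' ((fun ζ => c (s ζ) a) ⁻¹' {col}), ?_, col, ?_⟩
  · rw [mk_image_eq hs]
    exact (Order.lt_succ κ).trans_le hcol
  · rintro _ ⟨ζ, hζ, rfl⟩ _ ⟨ξ, hξ, rfl⟩ hne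
    rcases lt_or_gt_of_ne (ne_of_apply_ne s hne) with h | h
    · rw [(greedySeq_spec ha h).2]
      exact hζ
    · rw [hc, (greedySeq_spec ha h).2]
      exact hξ

theorem mk_le_spreadOf {X : Type u} [TopologicalSpace X] {D : Set X} (hD : DiscreteTopology D) :
    #D ≤ spreadOf X := by
  refine le_sup_of_le_right (le_csSup ⟨#X, ?_⟩ ⟨D, hD, rfl⟩)
  rintro _ ⟨D', -, rfl⟩
  exact mk_set_le D'

def IsLeftSeparated {Y I : Type*} [Preorder I] (t : TopologicalSpace Y) (x : I → Y) : Prop :=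
  ∀ i, x i ∉ closure[t] (x '' Iio i)

theorem exists_forall_image_Iio {α I : Type u} [LinearOrder I] [WellFoundedLT I]
    {μ : Cardinal.{u}} (hI : ∀ i : I, #(Iio i) ≤ μ) (P : Set α → α → Prop)
    (hP : ∀ S : Set α, #S ≤ μ → ∃ a, P S a) : ∃ f : I → α, ∀ i, P (f '' Iio i) (f i) := by
  have : Nonempty α := (hP ∅ (by simp)).nonempty
  let f : I → α :=
    WellFoundedLT.fix fun i g => Classical.epsilon (P (range fun j : Iio i => g j j.2))
  refine ⟨f, fun i => ?_⟩
  have hf : f i = Classical.epsilon (P (f '' Iio i)) := by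
    dsimp only [f]
    rw [WellFoundedLT.fix_eq, image_eq_range]
  exact hf ▸ Classical.epsilon_spec (hP _ (mk_image_le.trans (hI i)))

theorem tightnessOf_le_of_forall_not_isLeftSeparated {Y : Type u} (t : TopologicalSpace Y)
    {μ : Cardinal.{u}} (hμ : ℵ₀ ≤ μ)
    (h : ∀ x : (Order.succ μ).ord.ToType → Y, ¬IsLeftSeparated t x) : tightnessOf t ≤ μ := by
  let := t
  refine csInf_le' ⟨hμ, fun A p hp => ?_⟩
  by_contra! hA
  have hnext (S : Set Y) (hS : #S ≤ μ) : ∃ y, y ∈ A ∧ y ∉ closure (S ∩ A) := by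
    by_contra! hcl
    exact hA (S ∩ A) inter_subset_right ((mk_le_mk_of_subset inter_subset_left).trans hS)
      (closure_minimal hcl isClosed_closure hp)
  obtain ⟨x, hx⟩ := exists_forall_image_Iio mk_Iio_le_of_succ_ord_toType _ hnext
  refine h x fun i hi => (hx i).2 ?_
  rwa [inter_eq_left.mpr (image_subset_iff.mpr fun j _ => (hx j).1)]

theorem mem_closure_gDelta_iff_s12 {X : Type u} [t : TopologicalSpace X] {S : Set X} {y : X} :
    y ∈ closure[gDelta t] S ↔ ∀ G, IsGδ G → y ∈ G → (G ∩ S).Nonempty :=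
  @TopologicalSpace.IsTopologicalBasis.mem_closure_iff X (gDelta t) _
    (TopologicalSpace.isTopologicalBasis_of_subbasis_of_finiteInter (t := gDelta t) rfl
      ⟨.univ, fun _ hs _ ht => hs.inter ht⟩) S y

theorem exists_isClosed_nhds_disjoint_of_notMem_closure_gDelta {X : Type u}
    [t : TopologicalSpace X] [RegularSpace X] {S : Set X} {y : X}
    (hy : y ∉ closure[gDelta t] S) :
    ∃ F : ℕ → Set X, (∀ n, F n ∈ 𝓝 y ∧ IsClosed (F n)) ∧ Disjoint (⋂ n, F n) S := by
  obtain ⟨G, hG, hyG, hGS⟩ : ∃ G, IsGδ G ∧ y ∈ G ∧ G ∩ S = ∅ := by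
    simpa [mem_closure_gDelta_iff_s12, not_nonempty_iff_eq_empty] using hy
  obtain ⟨U, hU, rfl⟩ := isGδ_iff_eq_iInter_nat.mp hG
  choose F hF hFU using fun n =>
    (closed_nhds_basis y).mem_iff.mp ((hU n).mem_nhds (mem_iInter.mp hyG n))
  exact ⟨F, hF, disjoint_iff_inter_eq_empty.mpr
    (subset_eq_empty (inter_subset_inter_left _ (iInter_mono hFU)) hGS)⟩

theorem discreteTopology_of_forall_exists_mem_nhds {X : Type u} [TopologicalSpace X] {D : Set X}
    (h : ∀ d ∈ D, ∃ U ∈ 𝓝 d, U ∩ D ⊆ {d}) : DiscreteTopology D := by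
  refine discreteTopology_subtype_iff.mpr fun d hd => Filter.inf_principal_eq_bot.mpr ?_
  obtain ⟨U, hU, hUD⟩ := h d hd
  exact mem_nhdsWithin_iff_exists_mem_nhds_inter.mpr
    ⟨U, hU, fun y ⟨hyU, hyd⟩ hyD => hyd (hUD ⟨hyU, hyD⟩)⟩

section ClosedNeighbourhoodSequences

variable {X I : Type u} [TopologicalSpace X] [LinearOrder I] {x : I → X} {F : I → ℕ → Set X}

theorem notMem_closure_image_inter_Ioi [WellFoundedLT I] {K : I → Set X}
    (hK : ∀ i, IsClosed (K i)) (hxK : ∀ i, x i ∈ K i) (hsep : ∀ j i, j < i → x j ∉ K i)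
    {H : Set I} (hH : ∀ j ∈ H, ∀ i ∈ H, j < i → x i ∈ K j) (j : I) :
    x j ∉ closure (x '' (H ∩ Ioi j)) := by
  rcases (H ∩ Ioi j).eq_empty_or_nonempty with hE | hne
  · simp [hE]
  obtain ⟨s, ⟨hsH, hjs⟩, hmin⟩ := wellFounded_lt.has_min _ hne
  refine fun hcl => hsep j s hjs (closure_minimal ?_ (hK s) hcl)
  rintro _ ⟨i, ⟨hiH, hji⟩, rfl⟩
  rcases (not_lt.mp (hmin i ⟨hiH, hji⟩)).lt_or_eq with hsi | rfl
  · exact hH s hsH i hiH hsi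
  · exact hxK _

theorem discreteTopology_image_of_homogeneous [WellFoundedLT I]
    (hF : ∀ i n, F i n ∈ 𝓝 (x i) ∧ IsClosed (F i n))
    (hsep : ∀ j i, j < i → x j ∉ ⋂ n, F i n) {H : Set I} {m : ℕ}
    (hearlier : ∀ j ∈ H, ∀ i ∈ H, j < i → x j ∉ F i m)
    (hlater : (∀ j ∈ H, ∀ i ∈ H, j < i → x i ∈ ⋂ n, F j n) ∨
      ∃ n, ∀ j ∈ H, ∀ i ∈ H, j < i → x i ∉ F j n) :
    DiscreteTopology (x '' H) := by
  have hlater' : ∀ j ∈ H, ∃ U ∈ 𝓝 (x j), ∀ i ∈ H, j < i → x i ∉ U := by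
    rcases hlater with hK | ⟨n, hn⟩
    · have hxK (i : I) : x i ∈ ⋂ n, F i n := mem_iInter.2 fun n => mem_of_mem_nhds (hF i n).1
      have hKclosed (i : I) : IsClosed (⋂ n, F i n) := isClosed_iInter fun n => (hF i n).2
      refine fun j _ => ⟨_, isClosed_closure.compl_mem_nhds
        (notMem_closure_image_inter_Ioi hKclosed hxK hsep hK j),
        fun i hi hji hcl => hcl (subset_closure ⟨i, ⟨hi, hji⟩, rfl⟩)⟩
    · exact fun j hj => ⟨F j n, (hF j n).1, hn j hj⟩
  refine discreteTopology_of_forall_exists_mem_nhds ?_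
  rintro _ ⟨j, hj, rfl⟩
  obtain ⟨U, hU, hUlater⟩ := hlater' j hj
  refine ⟨F j m ∩ U, Filter.inter_mem (hF j m).1 hU, ?_⟩
  rintro _ ⟨⟨hFm, hU'⟩, i, hi, rfl⟩
  rcases lt_trichotomy i j with h | rfl | h
  · exact absurd hFm (hearlier i hi j hj h)
  · rfl
  · exact absurd hU' (hUlater i hi h)

theorem exists_discreteTopology_of_forall_notMem_iInter [WellFoundedLT I] {κ : Cardinal.{u}}
    (hκ : ℵ₀ ≤ κ) (hI : 2 ^ κ < #I) (hF : ∀ i n, F i n ∈ 𝓝 (x i) ∧ IsClosed (F i n))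
    (hsep : ∀ j i, j < i → x j ∉ ⋂ n, F i n) : ∃ D : Set X, DiscreteTopology D ∧ κ < #D := by
  have hxK (i : I) : x i ∈ ⋂ n, F i n := mem_iInter.2 fun n => mem_of_mem_nhds (hF i n).1
  have hx : Function.Injective x := .of_lt_imp_ne fun j i h hx => hsep j i h (hx ▸ hxK i)
  have hm (j i : I) : ∃ m, j < i → x j ∉ F i m := by
    by_cases h : j < i
    · simpa [h, mem_iInter] using hsep j i h
    · simp [h]
  have ho (j i : I) : ∃ o : Option ℕ, o.elim (x i ∈ ⋂ n, F j n) fun n => x i ∉ F j n := by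
    by_cases h : x i ∈ ⋂ n, F j n
    · exact ⟨none, h⟩
    · obtain ⟨n, hn⟩ : ∃ n, x i ∉ F j n := by simpa [mem_iInter] using h
      exact ⟨some n, hn⟩
  choose m hm using hm
  choose o ho using ho
  let c (a b : I) : ULift.{u} (Option ℕ × ℕ) :=
    ⟨(o (min a b) (max a b), m (min a b) (max a b))⟩
  obtain ⟨H, hH, ⟨oc, mc⟩, hc⟩ :=
    erdos_rado hκ (by simpa using hκ) hI c fun a b => by simp only [c, min_comm, max_comm]
  have hcol : ∀ j ∈ H, ∀ i ∈ H, j < i → o j i = oc ∧ m j i = mc := fun j hj i hi h => by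
    simpa [c, min_eq_left h.le, max_eq_right h.le] using hc j hj i hi h.ne
  refine ⟨x '' H, discreteTopology_image_of_homogeneous hF hsep (m := mc)
    (fun j hj i hi h => (hcol j hj i hi h).2 ▸ hm j i h) ?_, by rwa [mk_image_eq hx]⟩
  cases oc with
  | none => exact .inl fun j hj i hi h => by simpa [(hcol j hj i hi h).1] using ho j i
  | some n => exact .inr ⟨n, fun j hj i hi h => by simpa [(hcol j hj i hi h).1] using ho j i⟩

end ClosedNeighbourhoodSequences

/-- for regular `X`, `t(X_δ) ≤ 2^{s(X)}`. -/
theorem statement12 {X : Type u} [tX : TopologicalSpace X] [T3Space X] :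
    tightnessOf (gDelta tX) ≤ 2 ^ spreadOf X := by
  have hκ : ℵ₀ ≤ spreadOf X := le_sup_left
  refine tightnessOf_le_of_forall_not_isLeftSeparated _ (hκ.trans (cantor _).le) fun x hx => ?_
  choose F hF hFx using fun i => exists_isClosed_nhds_disjoint_of_notMem_closure_gDelta (hx i)
  obtain ⟨D, hD, hκD⟩ := exists_discreteTopology_of_forall_notMem_iInter hκ (by simp) hF
    fun j i h hj => (hFx i).notMem_of_mem_left hj (mem_image_of_mem x h)
  exact hκD.not_ge (mk_le_spreadOf hD)
end
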